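/- arXiv:2205.07583 — 2 statements merged into one kernel-verified Lean document; each statement's English description precedes it below -/
import Mathlib

section
/- Abstract semismooth Newton convergence: let F: X → Z between Banach spaces be Newton differentiable in an open neighborhood U of a root u (F[u] = 0), with Newton derivative D_N F. If for every ũ ∈ U all D ∈ D_N F[ũ] are boundedly invertible with uniformly bounded inverses, then the iteration u_{n+1} = u_n − D_n⁻¹ F[u_n] with any D_n ∈ D_N F[u_n] converges superlinearly to u provided u_0 is sufficiently close to u, i.e., ‖u_{n+1} − u‖/‖u_n − u‖ → 0. -/
/-!
Near the root, a Newton step with `D ∈ DN x` and its inverse `D⁻¹` moves `x` to a point with error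
`x - D⁻¹ F x - u = -D⁻¹ (F x - F u - D (x - u))`. Newton differentiability at `u` makes the
residual `o(‖x - u‖)` and the inverses are bounded by `M`, so the error shrinks by an arbitrarily
small factor once `x` is close enough to `u`: the factor `1/2` gives convergence from a fixed
neighbourhood, and then every factor `ε` is eventually reached.
-/

open Filter Topology

section RealSequence

theorem le_pow_mul_of_step_le {e : ℕ → ℝ} {c δ : ℝ} (he : ∀ k, 0 ≤ e k) (hc₀ : 0 ≤ c)
    (hc₁ : c ≤ 1) (he₀ : e 0 < δ) (hstep : ∀ k, e k < δ → e (k + 1) ≤ c * e k) :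
    ∀ k, e k ≤ c ^ k * e 0 := by
  intro k
  induction k with
  | zero => simp
  | succ k ih =>
    have hk : e k < δ :=
      calc e k ≤ c ^ k * e 0 := ih
        _ ≤ 1 * e 0 := mul_le_mul_of_nonneg_right (pow_le_one₀ hc₀ hc₁) (he 0)
        _ < δ := by rwa [one_mul]
    calc e (k + 1) ≤ c * e k := hstep k hk
      _ ≤ c * (c ^ k * e 0) := mul_le_mul_of_nonneg_left ih hc₀
      _ = c ^ (k + 1) * e 0 := by ring

theorem tendsto_zero_of_step_le {e : ℕ → ℝ} {c δ : ℝ} (he : ∀ k, 0 ≤ e k) (hc₀ : 0 ≤ c)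
    (hc₁ : c < 1) (he₀ : e 0 < δ) (hstep : ∀ k, e k < δ → e (k + 1) ≤ c * e k) :
    Tendsto e atTop (𝓝 0) := by
  refine squeeze_zero he (le_pow_mul_of_step_le he hc₀ hc₁.le he₀ hstep) ?_
  simpa using (tendsto_pow_atTop_nhds_zero_of_lt_one hc₀ hc₁).mul_const (e 0)

theorem eventually_step_le_of_tendsto_zero {e : ℕ → ℝ} (he : Tendsto e atTop (𝓝 0))
    (hstep : ∀ ε > (0 : ℝ), ∃ δ > (0 : ℝ), ∀ k, e k < δ → e (k + 1) ≤ ε * e k) :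
    ∀ ε > (0 : ℝ), ∃ N, ∀ k ≥ N, e (k + 1) ≤ ε * e k := by
  intro ε hε
  obtain ⟨δ, hδ, hsmall⟩ := hstep ε hε
  obtain ⟨N, hN⟩ := (he.eventually (gt_mem_nhds hδ)).exists_forall_of_atTop
  exact ⟨N, fun k hk => hsmall k (hN k hk)⟩

end RealSequence

section NewtonStep

variable {X Z : Type*} [NormedAddCommGroup X] [NormedSpace ℝ X]
  [NormedAddCommGroup Z] [NormedSpace ℝ Z]

def NewtonDifferentiableWithinAt (F : X → Z) (DN : X → Set (X →L[ℝ] Z)) (U : Set X) (x : X) :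
    Prop :=
  ∀ ε > (0 : ℝ), ∃ δ > (0 : ℝ), ∀ e : X, ‖e‖ < δ → x + e ∈ U →
    ∀ D ∈ DN (x + e), ‖F (x + e) - F x - D e‖ ≤ ε * ‖e‖

theorem norm_newton_step_sub_le {F : X → Z} {u x : X} {D : X →L[ℝ] Z} {L : Z →L[ℝ] X}
    (hroot : F u = 0) (hL : ∀ y, L (D y) = y) :
    ‖x - L (F x) - u‖ ≤ ‖L‖ * ‖F x - F u - D (x - u)‖ := by
  have herr : x - L (F x) - u = -L (F x - F u - D (x - u)) := by
    rw [hroot, sub_zero, map_sub, hL]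
    abel
  rw [herr, norm_neg]
  exact L.le_opNorm _

theorem NewtonDifferentiableWithinAt.newton_step_superlinear {F : X → Z}
    {DN : X → Set (X →L[ℝ] Z)} {U : Set X} {u : X} {M : ℝ}
    (hF : NewtonDifferentiableWithinAt F DN U u) (hU : U ∈ 𝓝 u) (hroot : F u = 0)
    (hinv : ∀ x ∈ U, ∀ D ∈ DN x, ∃ L : Z →L[ℝ] X, (∀ y, L (D y) = y) ∧ ‖L‖ ≤ M) :
    ∀ ε > (0 : ℝ), ∃ δ > (0 : ℝ), ∀ x, ‖x - u‖ < δ → ∀ D ∈ DN x, ∀ R : Z →L[ℝ] X,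
      (∀ z, D (R z) = z) → ‖x - R (F x) - u‖ ≤ ε * ‖x - u‖ := by
  intro ε hε
  obtain ⟨δU, hδU, hball⟩ := Metric.mem_nhds_iff.mp hU
  obtain ⟨δF, hδF, hres⟩ := hF (ε / (|M| + 1)) (by positivity)
  refine ⟨min δF δU, lt_min hδF hδU, fun x hx D hD R hR => ?_⟩
  have hxU : x ∈ U := hball <| by
    rw [Metric.mem_ball, dist_eq_norm]
    exact hx.trans_le (min_le_right _ _)
  have hux : u + (x - u) = x := add_sub_cancel u x
  have hresx : ‖F x - F u - D (x - u)‖ ≤ ε / (|M| + 1) * ‖x - u‖ := by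
    simpa only [hux] using
      hres (x - u) (hx.trans_le (min_le_left _ _)) (by rwa [hux]) D (by rwa [hux])
  obtain ⟨L, hL, hLM⟩ := hinv x hxU D hD
  have hRL : ⇑R = ⇑L := (Function.LeftInverse.eq_rightInverse hL hR).symm
  calc ‖x - R (F x) - u‖ = ‖x - L (F x) - u‖ := by rw [hRL]
    _ ≤ ‖L‖ * ‖F x - F u - D (x - u)‖ := norm_newton_step_sub_le hroot hL
    _ ≤ (|M| + 1) * (ε / (|M| + 1) * ‖x - u‖) :=
        mul_le_mul (by linarith [le_abs_self M]) hresx (norm_nonneg _) (by positivity)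
    _ = ε * ‖x - u‖ := by field_simp

end NewtonStep

theorem semismooth_newton_superlinear_convergence_general
    {X Z : Type*} [NormedAddCommGroup X] [NormedSpace ℝ X]
    [NormedAddCommGroup Z] [NormedSpace ℝ Z]
    (F : X → Z) (u : X) (U : Set X) (hU : IsOpen U) (huU : u ∈ U)
    (hroot : F u = 0)
    (DN : X → Set (X →L[ℝ] Z))
    -- Newton differentiability at points near u:
    -- sup_{D ∈ DN (x+e)} ‖F(x+e) − F x − D e‖ = o(‖e‖)
    (hsemi : ∀ x ∈ U, ∀ ε > (0:ℝ), ∃ δ > (0:ℝ), ∀ e : X, ‖e‖ < δ → x + e ∈ U →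
      ∀ D ∈ DN (x + e), ‖F (x + e) - F x - D e‖ ≤ ε * ‖e‖)
    (M : ℝ)
    -- every Newton derivative on U is boundedly invertible, uniformly:
    (hinv : ∀ x ∈ U, ∀ D ∈ DN x, ∃ Dinv : Z →L[ℝ] X,
      (∀ z, D (Dinv z) = z) ∧ (∀ y, Dinv (D y) = y) ∧ ‖Dinv‖ ≤ M) :
    ∃ δ > (0:ℝ), ∀ u₀ : X, ‖u₀ - u‖ < δ →
      ∀ useq : ℕ → X, useq 0 = u₀ →
      (∀ k, ∃ D ∈ DN (useq k), ∃ Dinv : Z →L[ℝ] X,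
        (∀ z, D (Dinv z) = z) ∧ (∀ y, Dinv (D y) = y) ∧
        useq (k + 1) = useq k - Dinv (F (useq k))) →
      Tendsto useq atTop (nhds u) ∧
      (∀ ε > (0:ℝ), ∃ N, ∀ k ≥ N, ‖useq (k + 1) - u‖ ≤ ε * ‖useq k - u‖) := by
  have hstep := NewtonDifferentiableWithinAt.newton_step_superlinear (hsemi u huU)
    (hU.mem_nhds huU) hroot fun x hx D hD => (hinv x hx D hD).imp fun _ h => h.2
  obtain ⟨δ, hδ, hhalf⟩ := hstep (1 / 2) (by norm_num)
  refine ⟨δ, hδ, fun u₀ hu₀ useq h0 hiter => ?_⟩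
  have herr : ∀ {ε δ : ℝ}, (∀ x, ‖x - u‖ < δ → ∀ D ∈ DN x, ∀ R : Z →L[ℝ] X,
      (∀ z, D (R z) = z) → ‖x - R (F x) - u‖ ≤ ε * ‖x - u‖) →
      ∀ k, ‖useq k - u‖ < δ → ‖useq (k + 1) - u‖ ≤ ε * ‖useq k - u‖ := by
    intro ε δ hsmall k hk
    obtain ⟨D, hD, R, hR, -, hnext⟩ := hiter k
    rw [hnext]
    exact hsmall _ hk D hD R hR
  have htend : Tendsto (fun k => ‖useq k - u‖) atTop (𝓝 0) :=
    tendsto_zero_of_step_le (fun _ => norm_nonneg _) (by norm_num) (by norm_num)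
      (by rwa [h0]) (herr hhalf)
  refine ⟨tendsto_iff_norm_sub_tendsto_zero.mpr htend,
    eventually_step_le_of_tendsto_zero htend fun ε hε => ?_⟩
  obtain ⟨δ', hδ', hsmall⟩ := hstep ε hε
  exact ⟨δ', hδ', herr hsmall⟩

/-- **Superlinear convergence of the semismooth Newton method** (Statement 13).
Let `F : X → Z` between Banach spaces be Newton differentiable on an open neighborhood
`U` of a root `u` (`F u = 0`), with Newton derivative `DN` having nonempty values. If all
Newton derivatives at points of `U` are invertible with inverses uniformly bounded by
`M`, then the semismooth Newton iteration `u_{n+1} = u_n − D_n⁻¹ F[u_n]`,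
`D_n ∈ DN (u_n)`, converges superlinearly to `u` provided `u₀` is close enough to `u`. -/
theorem semismooth_newton_superlinear_convergence
    {X Z : Type*} [NormedAddCommGroup X] [NormedSpace ℝ X] [CompleteSpace X]
    [NormedAddCommGroup Z] [NormedSpace ℝ Z] [CompleteSpace Z]
    (F : X → Z) (u : X) (U : Set X) (hU : IsOpen U) (huU : u ∈ U)
    (hroot : F u = 0)
    (DN : X → Set (X →L[ℝ] Z))
    (hne : ∀ x ∈ U, (DN x).Nonempty)
    -- Newton differentiability at points near u:
    -- sup_{D ∈ DN (x+e)} ‖F(x+e) − F x − D e‖ = o(‖e‖)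
    (hsemi : ∀ x ∈ U, ∀ ε > (0:ℝ), ∃ δ > (0:ℝ), ∀ e : X, ‖e‖ < δ → x + e ∈ U →
      ∀ D ∈ DN (x + e), ‖F (x + e) - F x - D e‖ ≤ ε * ‖e‖)
    (M : ℝ)
    -- every Newton derivative on U is boundedly invertible, uniformly:
    (hinv : ∀ x ∈ U, ∀ D ∈ DN x, ∃ Dinv : Z →L[ℝ] X,
      (∀ z, D (Dinv z) = z) ∧ (∀ y, Dinv (D y) = y) ∧ ‖Dinv‖ ≤ M) :
    ∃ δ > (0:ℝ), ∀ u₀ : X, ‖u₀ - u‖ < δ →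
      ∀ useq : ℕ → X, useq 0 = u₀ →
      (∀ k, ∃ D ∈ DN (useq k), ∃ Dinv : Z →L[ℝ] X,
        (∀ z, D (Dinv z) = z) ∧ (∀ y, Dinv (D y) = y) ∧
        useq (k + 1) = useq k - Dinv (F (useq k))) →
      Tendsto useq atTop (nhds u) ∧
      (∀ ε > (0:ℝ), ∃ N, ∀ k ≥ N, ‖useq (k + 1) - u‖ ≤ ε * ‖useq k - u‖) :=
  semismooth_newton_superlinear_convergence_general F u U hU huU hroot DN hsemi M hinv
end

section
/- Céa-type quasi-optimality for a nonlinear Galerkin problem: suppose a (possibly nonlinear) residual pairing satisfies a weak monotonicity bound with constant c > 0 and a Lipschitz-type continuity bound with constant C > 0 (as in the mixed HJB least-squares formulation), and let (u_h, g_h) solve the discrete problem in a finite-dimensional subspace V_h × G_h. Then ‖(u, ∇u) − (u_h, g_h)‖_{H¹(Ω)} ≤ (C/c) inf_{(φ,ψ) ∈ V_h × G_h} ‖(u, ∇u) − (φ, ψ)‖_{H¹(Ω)}. -/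
/-- **Céa-type quasi-optimality for the nonlinear Galerkin problem** (Statement 14).
In the abstract setting of the mixed least-squares HJB formulation, let `V` be the
(product `H¹`) space of pairs, `U` the exact solution pair `(u, ∇u)`, `S` a
finite-dimensional Galerkin subspace and `Uh ∈ S` the discrete solution.  Assume the
residual pairing `P` (of differences) satisfies weak monotonicity with constant `c > 0`,
a Lipschitz-type continuity bound with constant `C > 0`, and the Galerkin
orthogonality-type relation coming from the discrete problem. Then
`‖U − Uh‖ ≤ (C/c) inf_{Φ ∈ S} ‖U − Φ‖`. -/
theorem cea_quasi_optimality
    {V : Type*} [NormedAddCommGroup V] [NormedSpace ℝ V]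
    (P : V → V → V → V → ℝ)  -- pairing of difference pairs
    (c C : ℝ) (hc : 0 < c) (hC : 0 < C)
    (U : V) (S : Submodule ℝ V) (Uh : V) (hUh : Uh ∈ S)
    -- weak monotonicity
    (hmono : ∀ x y : V, c * ‖x - y‖ ^ 2 ≤ P x y x y)
    -- Lipschitz-type continuity
    (hcont : ∀ x x' y y' : V, P x x' y y' ≤ C * ‖x - x'‖ * ‖y - y'‖)
    -- Galerkin orthogonality-type relation from the discrete problem
    (hGal : ∀ Φ ∈ S, P U Uh U Uh = P U Uh U Φ) :
    ‖U - Uh‖ ≤ (C / c) * ⨅ Φ : S, ‖U - (Φ : V)‖ := by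
  have key : ∀ Φ : S, (c / C) * ‖U - Uh‖ ≤ ‖U - (Φ : V)‖ := by
    intro Φ
    have h1 : c * ‖U - Uh‖ ^ 2 ≤ C * ‖U - Uh‖ * ‖U - (Φ : V)‖ := by
      calc c * ‖U - Uh‖ ^ 2 ≤ P U Uh U Uh := hmono U Uh
        _ = P U Uh U Φ := hGal Φ Φ.2
        _ ≤ C * ‖U - Uh‖ * ‖U - (Φ : V)‖ := hcont U Uh U Φ
    rcases eq_or_lt_of_le (norm_nonneg (U - Uh)) with h0 | h0
    · rw [← h0]
      simpa using norm_nonneg (U - (Φ : V))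
    · rw [div_mul_eq_mul_div, div_le_iff₀ hC]
      nlinarith [norm_nonneg (U - (Φ : V))]
  have hinf : (c / C) * ‖U - Uh‖ ≤ ⨅ Φ : S, ‖U - (Φ : V)‖ :=
    le_ciInf key
  calc ‖U - Uh‖ = (C / c) * ((c / C) * ‖U - Uh‖) := by
        field_simp
    _ ≤ (C / c) * ⨅ Φ : S, ‖U - (Φ : V)‖ := by
        apply mul_le_mul_of_nonneg_left hinf (by positivity)
end
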